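/- If p(z) is a complex polynomial of degree n with all its zeros in |z| < k where k ≥ 1, then max_{|z|=1} |p'(z)| ≥ (n/(1+k^n)) · max_{|z|=1} |p(z)|. -/

import Mathlib

open Polynomial

noncomputable def maxMod (p : Polynomial ℂ) (c : ℝ) : ℝ :=
  sSup ((fun z => ‖p.eval z‖) '' {z : ℂ | ‖z‖ = c})

noncomputable def minMod (p : Polynomial ℂ) (c : ℝ) : ℝ :=
  sInf ((fun z => ‖p.eval z‖) '' {z : ℂ | ‖z‖ = c})

noncomputable def polarDeriv (p : Polynomial ℂ) (α : ℂ) : Polynomial ℂ :=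
  C (p.natDegree : ℂ) * p + (C α - X) * derivative p

/-!
Put `P := polarDeriv p 0 = n p - z p'`, so that `n p = z p' + P`. If every zero `r` of `p`
satisfies `|r| ≤ |w|`, then `Re (w / (w - r)) ≥ 1/2`; summing over the zeros gives
`Re (w p'(w) / p(w)) ≥ n/2`, which is exactly `|P(w)| ≤ |w p'(w)|`. Taking `|w| = k`, the
maximum modulus principle and the growth bound `M(f, k) ≤ k ^ deg f · M(f, 1)` (with
`M = maxMod`, proved via the reflected polynomial) applied to `f = z p'` give
`M(P, 1) ≤ M(P, k) ≤ k ^ n M(p', 1)`, hence `n M(p, 1) ≤ M(z p', 1) + M(P, 1) ≤ (1 + k ^ n) M(p', 1)`.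
-/

namespace Polynomial

lemma natDegree_X_mul_derivative_le {R : Type*} [Semiring R] (f : R[X]) :
    (X * derivative f).natDegree ≤ f.natDegree := by
  rcases eq_or_ne f.natDegree 0 with h | h
  · simp [derivative_of_natDegree_zero h]
  · have := natDegree_derivative_lt h
    have := natDegree_mul_le (p := X) (q := derivative f)
    have := natDegree_X_le (R := R)
    omega

lemma eval_reflect_inv_mul_pow {K : Type*} [Field K] (f : K[X]) {m : ℕ} (hm : f.natDegree ≤ m)
    {x : K} (hx : x ≠ 0) : (reflect m f).eval x⁻¹ * x ^ m = f.eval x := by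
  let := invertibleOfNonzero hx
  have h := eval₂_reflect_mul_pow (RingHom.id K) x m f hm
  rwa [invOf_eq_inv] at h

end Polynomial

section maxMod

variable (p q : ℂ[X])

lemma bddAbove_norm_eval_sphere (c : ℝ) :
    BddAbove ((fun z => ‖p.eval z‖) '' {z : ℂ | ‖z‖ = c}) := by
  have hsphere : {z : ℂ | ‖z‖ = c} = Metric.sphere 0 c := by ext; simp
  rw [hsphere]
  exact ((isCompact_sphere 0 c).image (by fun_prop)).bddAbove

lemma norm_eval_le_maxMod {c : ℝ} {z : ℂ} (hz : ‖z‖ = c) : ‖p.eval z‖ ≤ maxMod p c :=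
  le_csSup (bddAbove_norm_eval_sphere p c) ⟨z, hz, rfl⟩

lemma maxMod_le {c M : ℝ} (hc : 0 ≤ c) (h : ∀ z : ℂ, ‖z‖ = c → ‖p.eval z‖ ≤ M) :
    maxMod p c ≤ M :=
  csSup_le ⟨_, c, by simp [hc], rfl⟩ (by rintro _ ⟨z, hz, rfl⟩; exact h z hz)

lemma maxMod_le_maxMod_of_forall_norm_le {c : ℝ} (hc : 0 ≤ c)
    (h : ∀ z : ℂ, ‖z‖ = c → ‖p.eval z‖ ≤ ‖q.eval z‖) : maxMod p c ≤ maxMod q c :=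
  maxMod_le p hc fun z hz => (h z hz).trans (norm_eval_le_maxMod q hz)

lemma maxMod_add_le {c : ℝ} (hc : 0 ≤ c) : maxMod (p + q) c ≤ maxMod p c + maxMod q c :=
  maxMod_le _ hc fun z hz => by
    rw [eval_add]
    exact (norm_add_le _ _).trans
      (add_le_add (norm_eval_le_maxMod p hz) (norm_eval_le_maxMod q hz))

lemma maxMod_C_mul (a : ℂ) (c : ℝ) : maxMod (C a * p) c = ‖a‖ * maxMod p c := by
  simp only [maxMod, eval_mul, eval_C, norm_mul]
  rw [← smul_eq_mul, ← Real.sSup_smul_of_nonneg (norm_nonneg a), ← Set.image_smul,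
    Set.image_image]
  rfl

lemma norm_eval_le_maxMod_of_norm_le {R : ℝ} {z : ℂ} (hz : ‖z‖ ≤ R) :
    ‖p.eval z‖ ≤ maxMod p R := by
  rcases hz.eq_or_lt with hz | hz
  · exact norm_eval_le_maxMod p hz
  have hR : R ≠ 0 := ((norm_nonneg z).trans_lt hz).ne'
  refine Complex.norm_le_of_forall_mem_frontier_norm_le Metric.isBounded_ball
    p.differentiable.diffContOnCl (fun w hw => ?_) (subset_closure (mem_ball_zero_iff.2 hz))
  rw [frontier_ball 0 hR, mem_sphere_zero_iff_norm] at hw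
  exact norm_eval_le_maxMod p hw

lemma maxMod_mono {r R : ℝ} (hr : 0 ≤ r) (h : r ≤ R) : maxMod p r ≤ maxMod p R :=
  maxMod_le p hr fun _ hz => norm_eval_le_maxMod_of_norm_le p (hz.trans_le h)

lemma maxMod_le_pow_mul_maxMod_one {R : ℝ} (hR : 1 ≤ R) {m : ℕ} (hm : p.natDegree ≤ m) :
    maxMod p R ≤ R ^ m * maxMod p 1 := by
  have hreflect : maxMod (reflect m p) 1 ≤ maxMod p 1 := maxMod_le _ zero_le_one fun w hw => by
    have hw0 : w ≠ 0 := norm_ne_zero_iff.mp (hw ▸ one_ne_zero)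
    have h := norm_eval_le_maxMod p (z := w⁻¹) (c := 1) (by rw [norm_inv, hw, inv_one])
    rwa [← eval_reflect_inv_mul_pow p hm (inv_ne_zero hw0), inv_inv, norm_mul, norm_pow,
      norm_inv, hw, inv_one, one_pow, mul_one] at h
  refine maxMod_le p (by linarith) fun z hz => ?_
  have hz0 : z ≠ 0 := norm_ne_zero_iff.mp (by linarith)
  have hzinv : ‖z⁻¹‖ ≤ 1 := by rw [norm_inv, hz]; exact inv_le_one_of_one_le₀ hR
  rw [← eval_reflect_inv_mul_pow p hm hz0, norm_mul, norm_pow, hz, mul_comm]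
  gcongr
  exact (norm_eval_le_maxMod_of_norm_le _ hzinv).trans hreflect

end maxMod

lemma C_natDegree_mul_eq_X_mul_derivative_add_polarDeriv_zero (p : ℂ[X]) :
    C (p.natDegree : ℂ) * p = X * derivative p + polarDeriv p 0 := by
  simp only [polarDeriv, map_zero]
  ring

lemma eval_polarDeriv_zero (p : ℂ[X]) (w : ℂ) :
    (polarDeriv p 0).eval w = p.natDegree * p.eval w - w * (derivative p).eval w := by
  simp [polarDeriv, sub_eq_add_neg]

lemma one_le_two_mul_re_div_sub {w r : ℂ} (hr : ‖r‖ ≤ ‖w‖) (hwr : w ≠ r) :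
    1 ≤ 2 * (w / (w - r)).re := by
  have hd : 0 < Complex.normSq (w - r) := Complex.normSq_pos.mpr (sub_ne_zero.mpr hwr)
  have hnorm : Complex.normSq r ≤ Complex.normSq w := by
    simpa only [Complex.sq_norm] using pow_le_pow_left₀ (norm_nonneg r) hr 2
  rw [Complex.div_re, ← add_div, mul_div_assoc', le_div_iff₀ hd]
  simp only [Complex.normSq_apply, Complex.sub_re, Complex.sub_im] at hnorm ⊢
  nlinarith

lemma norm_ofReal_sub_le_norm {a : ℝ} {S : ℂ} (ha : 0 ≤ a) (h : a ≤ 2 * S.re) :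
    ‖(a : ℂ) - S‖ ≤ ‖S‖ := by
  rw [← sq_le_sq₀ (norm_nonneg _) (norm_nonneg _), Complex.sq_norm, Complex.sq_norm,
    Complex.normSq_apply, Complex.normSq_apply]
  simp only [Complex.sub_re, Complex.sub_im, Complex.ofReal_re, Complex.ofReal_im]
  nlinarith [mul_nonneg ha (sub_nonneg.2 h)]

theorem norm_eval_polarDeriv_zero_le (p : ℂ[X]) {w : ℂ} (h : ∀ r ∈ p.roots, ‖r‖ ≤ ‖w‖) :
    ‖(polarDeriv p 0).eval w‖ ≤ ‖w * (derivative p).eval w‖ := by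
  rw [eval_polarDeriv_zero]
  by_cases hw : p.IsRoot w
  · simp [hw.eq_zero]
  set S := (p.roots.map fun r => w / (w - r)).sum
  have hS : w * (derivative p).eval w = p.eval w * S := by
    rw [(IsAlgClosed.splits p).eval_derivative_eq_eval_mul_sum hw, mul_left_comm,
      ← Multiset.sum_map_mul_left]
    simp only [S, mul_one_div]
  have hre : (p.natDegree : ℝ) ≤ 2 * S.re := by
    have hterm : ∀ x ∈ p.roots.map fun r => 2 * (w / (w - r)).re, 1 ≤ x := by
      simp only [Multiset.mem_map]
      rintro _ ⟨r, hr, rfl⟩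
      exact one_le_two_mul_re_div_sub (h r hr) fun hwr => hw (hwr ▸ isRoot_of_mem_roots hr)
    have hSre : S.re = (p.roots.map fun r => (w / (w - r)).re).sum :=
      (map_multiset_sum Complex.reAddGroupHom _).trans (by rw [Multiset.map_map]; rfl)
    simpa [IsAlgClosed.card_roots_eq_natDegree, hSre, Multiset.sum_map_mul_left] using
      Multiset.card_nsmul_le_sum hterm
  calc ‖(p.natDegree : ℂ) * p.eval w - w * (derivative p).eval w‖
      = ‖p.eval w‖ * ‖((p.natDegree : ℝ) : ℂ) - S‖ := by
        rw [hS, ← norm_mul]; push_cast; ring_nf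
    _ ≤ ‖p.eval w‖ * ‖S‖ := by gcongr; exact norm_ofReal_sub_le_norm (by positivity) hre
    _ = ‖w * (derivative p).eval w‖ := by rw [hS, norm_mul]

theorem stmt4 (p : Polynomial ℂ) (n : ℕ) (hn : p.natDegree = n) (k : ℝ)
    (hk : 1 ≤ k)
    (hz : ∀ z : ℂ, p.IsRoot z → ‖z‖ < k) :
    (n / (1 + k ^ n)) * maxMod p 1 ≤ maxMod (derivative p) 1 := by
  subst hn
  set q := X * derivative p
  have hq : maxMod q 1 ≤ maxMod (derivative p) 1 :=
    maxMod_le_maxMod_of_forall_norm_le _ _ zero_le_one fun z hz => by simp [q, hz]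
  have hpolar : maxMod (polarDeriv p 0) 1 ≤ k ^ p.natDegree * maxMod q 1 := calc
    maxMod (polarDeriv p 0) 1 ≤ maxMod (polarDeriv p 0) k := maxMod_mono _ zero_le_one hk
    _ ≤ maxMod q k := maxMod_le_maxMod_of_forall_norm_le _ _ (by linarith) fun w hw => by
        simpa [q] using norm_eval_polarDeriv_zero_le p fun r hr =>
          hw ▸ (hz r (isRoot_of_mem_roots hr)).le
    _ ≤ k ^ p.natDegree * maxMod q 1 :=
        maxMod_le_pow_mul_maxMod_one q hk (natDegree_X_mul_derivative_le p)
  have hp : p.natDegree * maxMod p 1 ≤ maxMod q 1 + maxMod (polarDeriv p 0) 1 := by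
    have h := maxMod_add_le q (polarDeriv p 0) zero_le_one
    rwa [← C_natDegree_mul_eq_X_mul_derivative_add_polarDeriv_zero, maxMod_C_mul,
      Complex.norm_natCast] at h
  rw [div_mul_eq_mul_div, div_le_iff₀ (by positivity)]
  calc (p.natDegree : ℝ) * maxMod p 1 ≤ (1 + k ^ p.natDegree) * maxMod q 1 := by linarith
    _ ≤ _ := by rw [mul_comm]; gcongr
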